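/- arXiv:0807.2987 — 2 statements merged into one kernel-verified Lean document; each statement's English description precedes it below -/
import Mathlib

section
/- Let ω ∈ Ω with γ_{(1,1)}^ω = ((0,0),(1,0),(1,1)), and let ε : ℤ² → [0,∞) vanish off the vertical axis, i.e. ε(x,y) = 0 whenever x > 0. If ω(1,0) > ω(0,1) + ε(0,1), then for every z ∈ V(T_{(1,1)}^{ω+ε}) one has γ_z^{ω+ε} = γ_z^ω; in particular V(T_{(1,1)}^{ω+ε}) ⊆ V(T_{(1,1)}^ω). -/
/-!
An `(ω + ε)`-low-optimal path through `(1,1)` must enter it from `(1,0)`: rerouting through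
`(1,0)` instead of `(0,1)` would gain `ω(1,0) - ω(0,1) - ε(0,1) > 0`. After its first site such
a path never returns to the axis, so its `ε`-length is `ε(0,0)`, the least `ε`-length of any path.
An `(ω + ε)`-optimal path of minimal `ε`-length is `ω`-optimal, and then every `ω`-optimal path
is `(ω + ε)`-optimal, so low-optimality for `ω + ε` passes to `ω`; uniqueness of low-optimal
paths gives `γ_z^{ω+ε} = γ_z^ω`.
-/

open scoped NNReal

/-- A site of the lattice `ℤ²`. -/
abbrev Site : Type := ℤ × ℤ

/-- The positive quadrant `ℤ₊²`. -/
def posQuad : Set Site := {z : Site | 0 ≤ z.1 ∧ 0 ≤ z.2}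

/-- An admissible (up-right) step. -/
def IsStep (u v : Site) : Prop := v = u + (1, 0) ∨ v = u + (0, 1)

/-- `γ` is an up-right path from `(0,0)` to `z`, i.e. `γ ∈ Γ_z`. -/
def IsPathTo (z : Site) (γ : List Site) : Prop :=
  γ.head? = some ((0, 0) : Site) ∧ γ.getLast? = some z ∧ γ.Chain' IsStep

/-- The length `ω(γ) = Σ_{z ∈ γ} ω(z)` of a path `γ` under the configuration `ω`. -/
noncomputable def plen (ω : Site → ℝ) (γ : List Site) : ℝ := (γ.map ω).sum

/-- `γ ∈ Γ_z` is `ω`-optimal if its length is maximal over `Γ_z`. -/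
def IsOptimal (ω : Site → ℝ) (z : Site) (γ : List Site) : Prop :=
  IsPathTo z γ ∧ ∀ γ' : List Site, IsPathTo z γ' → plen ω γ' ≤ plen ω γ

/-- `γ` is below `γ'`: at every step index, the second coordinate of the site of `γ`
is at most that of the corresponding site of `γ'`. -/
def Below (γ γ' : List Site) : Prop :=
  ∀ (i : ℕ) (h : i < γ.length) (h' : i < γ'.length),
    (γ.get ⟨i, h⟩).2 ≤ (γ'.get ⟨i, h'⟩).2

/-- `γ` is the low-optimal path of `Γ_z`: it is `ω`-optimal and below every
`ω`-optimal path of `Γ_z`. -/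
def IsLowOptimal (ω : Site → ℝ) (z : Site) (γ : List Site) : Prop :=
  IsOptimal ω z γ ∧ ∀ γ' : List Site, IsOptimal ω z γ' → Below γ γ'

open Classical in
/-- The low-optimal path `γ_z^ω` (an arbitrary default when it does not exist). -/
noncomputable def lowOpt (ω : Site → ℝ) (z : Site) : List Site :=
  if h : ∃ γ : List Site, IsLowOptimal ω z γ then h.choose else []

/-- The vertex set `V(T_z^ω) = {z' ∈ ℤ₊² : z ∈ γ_{z'}^ω}` of the subtree rooted at `z`. -/
def treeV (ω : Site → ℝ) (z : Site) : Set Site :=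
  {z' : Site | z' ∈ posQuad ∧ z ∈ lowOpt ω z'}

theorem IsStep.fst_add_snd {u v : Site} (h : IsStep u v) : v.1 + v.2 = u.1 + u.2 + 1 := by
  rcases h with rfl | rfl <;> simp only [Prod.fst_add, Prod.snd_add] <;> ring

theorem IsStep.fst_le {u v : Site} (h : IsStep u v) : u.1 ≤ v.1 := by
  rcases h with rfl | rfl <;> simp

theorem fst_le_of_isChain_cons {a w : Site} {l : List Site} (hc : (a :: l).IsChain IsStep)
    (hw : w ∈ a :: l) : a.1 ≤ w.1 := by
  obtain rfl | hw := List.mem_cons.mp hw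
  · exact le_rfl
  have hmono : ((a :: l).map Prod.fst).IsChain (· ≤ ·) :=
    List.isChain_map_of_isChain Prod.fst (fun _ _ h => IsStep.fst_le h) hc
  exact List.pairwise_cons.mp hmono.pairwise |>.1 _ (List.mem_map_of_mem hw)

theorem fst_add_snd_getElem {γ : List Site} (hh : γ.head? = some ((0, 0) : Site))
    (hc : γ.IsChain IsStep) (i : ℕ) (hi : i < γ.length) : γ[i].1 + γ[i].2 = i := by
  induction i with
  | zero => cases γ <;> simp_all
  | succ i ih =>
    have := (List.IsChain.getElem hc i hi).fst_add_snd
    push_cast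
    linarith [ih (by omega)]

namespace IsPathTo

variable {z : Site} {γ : List Site}

theorem zero_mem (hp : IsPathTo z γ) : ((0, 0) : Site) ∈ γ :=
  List.mem_of_mem_head? hp.1

theorem length_eq (hp : IsPathTo z γ) : (γ.length : ℤ) = z.1 + z.2 + 1 := by
  have hne : γ ≠ [] := by rintro rfl; simp [IsPathTo] at hp
  have hpos : 0 < γ.length := List.length_pos_iff.mpr hne
  have hlast : γ[γ.length - 1] = z := by
    rw [← List.getLast_eq_getElem hne]
    simpa [List.getLast?_eq_some_getLast hne] using hp.2.1
  have := fst_add_snd_getElem hp.1 hp.2.2 (γ.length - 1) (by omega)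
  rw [hlast] at this
  omega

theorem ext_snd {γ' : List Site} (hp : IsPathTo z γ) (hp' : IsPathTo z γ')
    (hsnd : ∀ i (hi : i < γ.length) (hi' : i < γ'.length), γ[i].2 = γ'[i].2) : γ = γ' := by
  have hlen : γ.length = γ'.length := by have := hp.length_eq; have := hp'.length_eq; omega
  refine List.ext_getElem hlen fun i hi hi' => Prod.ext ?_ (hsnd i hi hi')
  have := fst_add_snd_getElem hp.1 hp.2.2 i hi
  have := fst_add_snd_getElem hp'.1 hp'.2.2 i hi'
  linarith [hsnd i hi hi']

theorem replace_second {a b b' c : Site} {t : List Site} (hp : IsPathTo z (a :: b :: c :: t))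
    (hab' : IsStep a b') (hb'c : IsStep b' c) : IsPathTo z (a :: b' :: c :: t) := by
  obtain ⟨hh, hl, hc⟩ := hp
  refine ⟨hh, by simpa using hl, ?_⟩
  exact List.isChain_cons_cons.mpr ⟨hab', List.isChain_cons_cons.mpr ⟨hb'c, hc.of_cons.of_cons⟩⟩

theorem eq_cons_of_one_one_mem (hp : IsPathTo z γ) (hmem : ((1, 1) : Site) ∈ γ) :
    ∃ b t, γ = ((0, 0) : Site) :: b :: (1, 1) :: t ∧ (b = (1, 0) ∨ b = (0, 1)) := by
  obtain ⟨k, hk, hget⟩ := List.mem_iff_getElem.mp hmem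
  have hk2 : k = 2 := by
    have := fst_add_snd_getElem hp.1 hp.2.2 k hk
    rw [hget] at this
    omega
  subst hk2
  obtain ⟨hh, -, hc⟩ := hp
  match γ, hk with
  | a :: b :: c :: t, _ =>
    obtain rfl : a = (0, 0) := by simpa using hh
    obtain rfl : c = (1, 1) := hget
    refine ⟨b, t, rfl, ?_⟩
    rcases (List.isChain_cons_cons.mp hc).1 with rfl | rfl <;> simp

end IsPathTo

theorem IsLowOptimal.unique {ω : Site → ℝ} {z : Site} {γ γ' : List Site}
    (h : IsLowOptimal ω z γ) (h' : IsLowOptimal ω z γ') : γ = γ' :=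
  h.1.1.ext_snd h'.1.1 fun i hi hi' => le_antisymm (h.2 γ' h'.1 i hi hi') (h'.2 γ h.1 i hi' hi)

theorem lowOpt_eq {ω : Site → ℝ} {z : Site} {γ : List Site} (h : IsLowOptimal ω z γ) :
    lowOpt ω z = γ := by
  have hex : ∃ γ', IsLowOptimal ω z γ' := ⟨γ, h⟩
  rw [lowOpt, dif_pos hex]
  exact hex.choose_spec.unique h

theorem isLowOptimal_lowOpt_of_mem {ω : Site → ℝ} {z a : Site} (ha : a ∈ lowOpt ω z) :
    IsLowOptimal ω z (lowOpt ω z) := by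
  unfold lowOpt at ha ⊢
  split_ifs at ha ⊢ with hex
  · exact hex.choose_spec
  · simp at ha

theorem plen_add (ω ε : Site → ℝ) (γ : List Site) :
    plen (fun s => ω s + ε s) γ = plen ω γ + plen ε γ :=
  List.sum_map_add

theorem le_plen_of_mem {ε : Site → ℝ} (hε : ∀ s, 0 ≤ ε s) {a : Site} {γ : List Site}
    (ha : a ∈ γ) : ε a ≤ plen ε γ :=
  List.single_le_sum (fun _ hx => by obtain ⟨s, -, rfl⟩ := List.mem_map.mp hx; exact hε s) _
    (List.mem_map_of_mem ha)

theorem plen_eq_zero {ε : Site → ℝ} {γ : List Site} (hε : ∀ s ∈ γ, ε s = 0) : plen ε γ = 0 :=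
  List.sum_eq_zero fun _ hx => by obtain ⟨s, hs, rfl⟩ := List.mem_map.mp hx; exact hε s hs

theorem IsLowOptimal.of_add {ω ε : Site → ℝ} {z : Site} {γ : List Site}
    (hγ : IsLowOptimal (fun s => ω s + ε s) z γ)
    (hmin : ∀ γ', IsPathTo z γ' → plen ε γ ≤ plen ε γ') : IsLowOptimal ω z γ := by
  obtain ⟨⟨hp, hopt⟩, hlow⟩ := hγ
  have hoptω : IsOptimal ω z γ := ⟨hp, fun γ' hp' => by
    linarith [hopt γ' hp', hmin γ' hp', plen_add ω ε γ, plen_add ω ε γ']⟩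
  refine ⟨hoptω, fun γ' hγ' => hlow γ' ⟨hγ'.1, fun γ'' hp'' => ?_⟩⟩
  linarith [hopt γ'' hp'', hγ'.2 γ hp, hmin γ' hγ'.1, plen_add ω ε γ, plen_add ω ε γ']

theorem IsLowOptimal.of_add_of_one_one_mem {ω ε : Site → ℝ} (hε : ∀ s, 0 ≤ ε s)
    (hvan : ∀ s : Site, 0 < s.1 → ε s = 0) (h : ω (0, 1) + ε (0, 1) < ω (1, 0))
    {z : Site} {γ : List Site} (hγ : IsLowOptimal (fun s => ω s + ε s) z γ)
    (hmem : ((1, 1) : Site) ∈ γ) : IsLowOptimal ω z γ := by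
  obtain ⟨b, t, rfl, hb⟩ := hγ.1.1.eq_cons_of_one_one_mem hmem
  have hε10 : ε (1, 0) = 0 := hvan _ one_pos
  obtain rfl : b = (1, 0) := by
    refine hb.resolve_right fun hb01 => ?_
    subst hb01
    have := hγ.1.2 _ (hγ.1.1.replace_second (b' := (1, 0)) (Or.inl rfl) (Or.inr rfl))
    simp only [plen, List.map_cons, List.sum_cons, hε10] at this
    linarith
  refine hγ.of_add fun γ' hp' => ?_
  have hrest : plen ε ((1, 0) :: (1, 1) :: t) = 0 := plen_eq_zero fun s hs =>
    hvan s (lt_of_lt_of_le one_pos (fst_le_of_isChain_cons hγ.1.1.2.2.of_cons hs))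
  calc plen ε (((0, 0) : Site) :: (1, 0) :: (1, 1) :: t)
      = ε (0, 0) + plen ε ((1, 0) :: (1, 1) :: t) := List.sum_cons
    _ = ε (0, 0) := by rw [hrest, add_zero]
    _ ≤ plen ε γ' := le_plen_of_mem hε hp'.zero_mem

theorem tree_shrinks_axis_general (ω ε : Site → ℝ)
    (hε : ∀ z : Site, 0 ≤ ε z)
    (hvan : ∀ z : Site, 0 < z.1 → ε z = 0)
    (h : ω (0, 1) + ε (0, 1) < ω (1, 0)) :
    (∀ z ∈ treeV (fun s => ω s + ε s) (1, 1),
      lowOpt (fun s => ω s + ε s) z = lowOpt ω z) ∧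
    treeV (fun s => ω s + ε s) (1, 1) ⊆ treeV ω (1, 1) := by
  have hlow : ∀ z ∈ treeV (fun s => ω s + ε s) (1, 1),
      IsLowOptimal ω z (lowOpt (fun s => ω s + ε s) z) := fun z hz =>
    (isLowOptimal_lowOpt_of_mem hz.2).of_add_of_one_one_mem hε hvan h hz.2
  refine ⟨fun z hz => (lowOpt_eq (hlow z hz)).symm, fun z hz => ⟨hz.1, ?_⟩⟩
  rw [lowOpt_eq (hlow z hz)]
  exact hz.2

/-- Step I of the proof of Theorem 3: if `ε` vanishes off the vertical axis and
`ω(1,0) > ω(0,1) + ε(0,1)`, then low-optimal paths to vertices of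
`T_{(1,1)}^{ω+ε}` are unchanged; in particular `V(T_{(1,1)}^{ω+ε}) ⊆ V(T_{(1,1)}^ω)`. -/
theorem tree_shrinks_axis (ω ε : Site → ℝ) (hω : ∀ z : Site, 0 ≤ ω z)
    (hε : ∀ z : Site, 0 ≤ ε z)
    (hω1 : lowOpt ω (1, 1) = [((0, 0) : Site), (1, 0), (1, 1)])
    (hvan : ∀ z : Site, 0 < z.1 → ε z = 0)
    (h : ω (0, 1) + ε (0, 1) < ω (1, 0)) :
    (∀ z ∈ treeV (fun s => ω s + ε s) (1, 1),
      lowOpt (fun s => ω s + ε s) z = lowOpt ω z) ∧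
    treeV (fun s => ω s + ε s) (1, 1) ⊆ treeV ω (1, 1) :=
  tree_shrinks_axis_general ω ε hε hvan h
end

section
/- Let ω ∈ Ω, m ∈ ℕ and b = (m−1,0), and let ω^b be defined by ω^b(0,0) = ω(γ_b^ω), ω^b(0,y) = ω(γ_{b+(0,y)}^ω) − ω(γ_{b+(0,y−1)}^ω) for y ≥ 1, and ω^b(z) = ω(b+z) otherwise. Then ω ∈ Ω_m if and only if ω^b ∈ Ω_1, where Ω_k = {ω : γ_{(k,1)}^ω = ((0,0),(1,0),…,(k,0),(k,1))}. -/
open scoped NNReal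

/-- The path `((0,0), (1,0), …, (m,0), (m,1))`. -/
def axisPath (m : ℕ) : List Site :=
  ((List.range (m + 1)).map fun i => ((i : ℤ), 0)) ++ [((m : ℤ), 1)]

/-!
A path from `(0,0)` to `(n,1)` runs along the axis to a column `k ≤ n`, steps up there and
continues along the row `y = 1`; it is determined by this corner `k`, and a later corner means
a lower path. So `γ_{(n,1)}^ω = axisPath n` exactly when the corner `n` is optimal, and the
lowest optimal path exists because there are finitely many corners.

Write `G(z) = ω(γ_z^ω)`. For `n + 1` the corners `k ≤ n` give paths of length at most
`G(n,1) + ω(n+1,1)`, with equality for one of them, while the corner `n + 1` gives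
`G(n,0) + ω(n+1,0) + ω(n+1,1)`. Hence `ω ∈ Ω_{n+1}` iff `G(n,1) - G(n,0) ≤ ω(n+1,0)`; for `n = 0`
this reads `ω(0,1) ≤ ω(1,0)`. With `n = m - 1` the two sides are `ω^b(0,1)` and `ω^b(1,0)`.
-/

namespace IsPathTo

lemma append_of_isStep {z w : Site} {γ : List Site} (h : IsPathTo w γ) (hs : IsStep w z) :
    IsPathTo z (γ ++ [z]) := by
  obtain ⟨hhead, hlast, hchain⟩ := h
  have hne : γ ≠ [] := by rintro rfl; simp at hhead
  refine ⟨by rwa [List.head?_append_of_ne_nil _ hne], by simp, ?_⟩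
  refine List.isChain_append.2 ⟨hchain, List.isChain_singleton _, ?_⟩
  rintro x hx y hy
  rw [hlast, Option.mem_some_iff] at hx
  simp only [List.head?_cons, Option.mem_some_iff] at hy
  exact hx ▸ hy ▸ hs

lemma eq_singleton_or_eq_append {z : Site} {γ : List Site} (h : IsPathTo z γ) :
    (γ = [(0, 0)] ∧ z = (0, 0)) ∨
      ∃ γ', (IsPathTo (z - (1, 0)) γ' ∨ IsPathTo (z - (0, 1)) γ') ∧ γ = γ' ++ [z] := by
  obtain ⟨hhead, hlast, hchain⟩ := h
  rcases List.eq_nil_or_concat γ with rfl | ⟨γ', a, rfl⟩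
  · simp at hhead
  obtain rfl : a = z := by simpa using hlast
  rcases List.eq_nil_or_concat γ' with rfl | ⟨γ'', w, rfl⟩
  · simp_all
  simp only [List.concat_eq_append] at hhead hchain ⊢
  obtain ⟨hchain', -, hstep⟩ := List.isChain_append.1 hchain
  have hpath : IsPathTo w (γ'' ++ [w]) :=
    ⟨by simpa using hhead, by simp, hchain'⟩
  refine Or.inr ⟨γ'' ++ [w], ?_, rfl⟩
  rcases hstep w (by simp) a (by simp) with rfl | rfl <;> simp [hpath]

lemma nonneg {z : Site} {γ : List Site} (h : IsPathTo z γ) : 0 ≤ z.1 ∧ 0 ≤ z.2 := by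
  rcases h.eq_singleton_or_eq_append with ⟨-, rfl⟩ | ⟨γ', hγ' | hγ', rfl⟩
  · simp
  all_goals
    have := IsPathTo.nonneg hγ'
    simp only [Prod.fst_sub, Prod.snd_sub] at this
    omega
termination_by γ.length
decreasing_by all_goals simp_all

end IsPathTo

lemma plen_append_singleton (ω : Site → ℝ) (γ : List Site) (z : Site) :
    plen ω (γ ++ [z]) = plen ω γ + ω z := by
  simp [plen]

lemma below_refl (γ : List Site) : Below γ γ := fun _ _ _ => le_rfl

lemma lowOpt_isLowOptimal {ω : Site → ℝ} {z : Site} (h : ∃ γ, IsLowOptimal ω z γ) :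
    IsLowOptimal ω z (lowOpt ω z) := by
  rw [lowOpt, dif_pos h]
  exact h.choose_spec

def axisRow (n : ℕ) : List Site := (List.range (n + 1)).map fun i : ℕ => ((i : ℤ), 0)

def cornerPath (n k : ℕ) : List Site :=
  axisPath k ++ (List.range (n - k)).map fun i => (((k + i + 1 : ℕ) : ℤ), 1)

-- The binder of the map in `axisPath` has type `ℤ`: `List.range (m + 1)` is coerced to `List ℤ`
-- through `List.flatMap`, which is why this is not `rfl`.
lemma axisPath_eq_axisRow_append (n : ℕ) : axisPath n = axisRow n ++ [((n : ℤ), 1)] := by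
  simp [axisPath, axisRow, ← List.map_eq_flatMap]

lemma axisRow_succ (n : ℕ) : axisRow (n + 1) = axisRow n ++ [((n : ℤ) + 1, 0)] := by
  simp [axisRow, List.range_succ]

@[simp]
lemma cornerPath_self (n : ℕ) : cornerPath n n = axisPath n := by
  simp [cornerPath]

lemma cornerPath_succ {n k : ℕ} (hk : k ≤ n) :
    cornerPath (n + 1) k = cornerPath n k ++ [((n : ℤ) + 1, 1)] := by
  rw [cornerPath, cornerPath, Nat.sub_add_comm hk, List.range_succ, List.map_append,
    List.append_assoc, List.map_singleton, Nat.add_sub_of_le hk]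
  push_cast
  rfl

lemma isPathTo_axisRow (n : ℕ) : IsPathTo ((n : ℤ), 0) (axisRow n) := by
  induction n with
  | zero => exact ⟨rfl, rfl, List.isChain_singleton _⟩
  | succ n ih =>
    rw [axisRow_succ]
    simpa using ih.append_of_isStep (Or.inl rfl)

lemma isPathTo_cornerPath {n k : ℕ} (hk : k ≤ n) : IsPathTo ((n : ℤ), 1) (cornerPath n k) := by
  induction n, hk using Nat.le_induction with
  | base =>
    rw [cornerPath_self, axisPath_eq_axisRow_append]
    exact (isPathTo_axisRow k).append_of_isStep (Or.inr rfl)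
  | succ n hkn ih =>
    rw [cornerPath_succ hkn]
    simpa using ih.append_of_isStep (Or.inl rfl)

lemma eq_axisRow_of_isPathTo {n : ℕ} {γ : List Site} (h : IsPathTo ((n : ℤ), 0) γ) :
    γ = axisRow n := by
  induction n generalizing γ with
  | zero =>
    rcases h.eq_singleton_or_eq_append with ⟨rfl, -⟩ | ⟨γ', hγ' | hγ', -⟩
    · rfl
    all_goals have := hγ'.nonneg; norm_num at this
  | succ n ih =>
    rcases h.eq_singleton_or_eq_append with ⟨-, hz⟩ | ⟨γ', hγ' | hγ', rfl⟩
    · simp only [Prod.ext_iff] at hz; omega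
    · have hw : ((((n + 1 : ℕ) : ℤ), 0) : Site) - (1, 0) = ((n : ℤ), 0) := by
        ext <;> simp
      rw [hw] at hγ'
      rw [ih hγ', axisRow_succ]
      simp
    · have := hγ'.nonneg; norm_num at this

lemma exists_eq_cornerPath_of_isPathTo {n : ℕ} {γ : List Site} (h : IsPathTo ((n : ℤ), 1) γ) :
    ∃ k ≤ n, γ = cornerPath n k := by
  induction n generalizing γ with
  | zero =>
    rcases h.eq_singleton_or_eq_append with ⟨-, hz⟩ | ⟨γ', hγ' | hγ', rfl⟩
    · simp only [Prod.ext_iff] at hz; omega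
    · have := hγ'.nonneg; norm_num at this
    · refine ⟨0, le_rfl, ?_⟩
      have hw : ((((0 : ℕ) : ℤ), 1) : Site) - (0, 1) = (((0 : ℕ) : ℤ), 0) := by
        ext <;> simp
      rw [hw] at hγ'
      rw [eq_axisRow_of_isPathTo hγ', cornerPath_self, axisPath_eq_axisRow_append]
  | succ n ih =>
    rcases h.eq_singleton_or_eq_append with ⟨-, hz⟩ | ⟨γ', hγ' | hγ', rfl⟩
    · simp only [Prod.ext_iff] at hz; omega
    · have hw : ((((n + 1 : ℕ) : ℤ), 1) : Site) - (1, 0) = ((n : ℤ), 1) := by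
        ext <;> simp
      rw [hw] at hγ'
      obtain ⟨k, hk, rfl⟩ := ih hγ'
      refine ⟨k, hk.trans n.le_succ, ?_⟩
      rw [cornerPath_succ hk]
      simp
    · have hw : ((((n + 1 : ℕ) : ℤ), 1) : Site) - (0, 1) = (((n + 1 : ℕ) : ℤ), 0) := by
        ext <;> simp
      refine ⟨n + 1, le_rfl, ?_⟩
      rw [hw] at hγ'
      rw [eq_axisRow_of_isPathTo hγ', cornerPath_self, axisPath_eq_axisRow_append]

lemma length_cornerPath {n k : ℕ} (hk : k ≤ n) : (cornerPath n k).length = n + 2 := by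
  simp [cornerPath, axisPath]
  omega

lemma snd_getElem_cornerPath (n k i : ℕ) (hi : i < (cornerPath n k).length) :
    (cornerPath n k)[i].2 = if i ≤ k then 0 else 1 := by
  set tail : List Site := ((k : ℤ), 1) :: (List.range (n - k)).map
    fun i => (((k + i + 1 : ℕ) : ℤ), 1)
  have hsplit : cornerPath n k = axisRow k ++ tail := by
    simp [tail, cornerPath, axisPath_eq_axisRow_append]
  have htail : ∀ p ∈ tail, p.2 = 1 := by simp [tail]
  have hlen : (axisRow k).length = k + 1 := by simp [axisRow]
  simp only [List.getElem_of_eq hsplit hi, List.getElem_append, hlen]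
  split_ifs
  · simp [axisRow]
  · omega
  · omega
  · exact htail _ (List.getElem_mem _)

lemma below_cornerPath_iff {n k j : ℕ} (hk : k ≤ n) (hj : j ≤ n) :
    Below (cornerPath n k) (cornerPath n j) ↔ j ≤ k := by
  constructor
  · intro h
    by_contra! hkj
    have := h j (by rw [length_cornerPath hk]; omega) (by rw [length_cornerPath hj]; omega)
    simp only [List.get_eq_getElem, snd_getElem_cornerPath] at this
    rw [if_neg hkj.not_ge, if_pos le_rfl] at this
    exact absurd this (by norm_num)
  · intro hjk i hi hi'
    simp only [List.get_eq_getElem, snd_getElem_cornerPath]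
    split_ifs <;> omega

lemma lowOpt_axisRow (ω : Site → ℝ) (n : ℕ) : lowOpt ω ((n : ℤ), 0) = axisRow n := by
  have h : IsLowOptimal ω ((n : ℤ), 0) (axisRow n) := by
    refine ⟨⟨isPathTo_axisRow n, fun γ hγ => ?_⟩, fun γ hγ => ?_⟩
    · rw [eq_axisRow_of_isPathTo hγ]
    · rw [eq_axisRow_of_isPathTo hγ.1]
      exact below_refl _
  exact eq_axisRow_of_isPathTo (lowOpt_isLowOptimal ⟨_, h⟩).1.1

lemma isOptimal_iff_forall_cornerPath {ω : Site → ℝ} {n : ℕ} {γ : List Site}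
    (hγ : IsPathTo ((n : ℤ), 1) γ) :
    IsOptimal ω ((n : ℤ), 1) γ ↔ ∀ k ≤ n, plen ω (cornerPath n k) ≤ plen ω γ := by
  refine ⟨fun h k hk => h.2 _ (isPathTo_cornerPath hk), fun h => ⟨hγ, fun γ' hγ' => ?_⟩⟩
  obtain ⟨k, hk, rfl⟩ := exists_eq_cornerPath_of_isPathTo hγ'
  exact h k hk

lemma lowOpt_eq_cornerPath {ω : Site → ℝ} {n k : ℕ} (hk : k ≤ n)
    (h : IsLowOptimal ω ((n : ℤ), 1) (cornerPath n k)) :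
    lowOpt ω ((n : ℤ), 1) = cornerPath n k := by
  have hlow := lowOpt_isLowOptimal ⟨_, h⟩
  obtain ⟨j, hj, hγ⟩ := exists_eq_cornerPath_of_isPathTo hlow.1.1
  rw [hγ] at hlow ⊢
  have hkj := (below_cornerPath_iff hj hk).1 (hlow.2 _ h.1)
  have hjk := (below_cornerPath_iff hk hj).1 (h.2 _ hlow.1)
  rw [le_antisymm hjk hkj]

-- The lowest among the longest corner paths is the one with the last corner.
lemma exists_isLowOptimal_cornerPath (ω : Site → ℝ) (n : ℕ) :
    ∃ k ≤ n, IsLowOptimal ω ((n : ℤ), 1) (cornerPath n k) := by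
  let IsMax : ℕ → Prop := fun k => ∀ j ≤ n, plen ω (cornerPath n j) ≤ plen ω (cornerPath n k)
  obtain ⟨k₀, hk₀n, hk₀⟩ := (Finset.range (n + 1)).exists_max_image
    (fun k => plen ω (cornerPath n k)) ⟨0, by simp⟩
  have hmax : IsMax (Nat.findGreatest IsMax n) :=
    Nat.findGreatest_spec (m := k₀) (Finset.mem_range_succ_iff.1 hk₀n)
      fun j hj => hk₀ j (Finset.mem_range_succ_iff.2 hj)
  have hkn := Nat.findGreatest_le (P := IsMax) n
  refine ⟨_, hkn, (isOptimal_iff_forall_cornerPath (isPathTo_cornerPath hkn)).2 hmax,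
    fun γ hγ => ?_⟩
  obtain ⟨j, hj, rfl⟩ := exists_eq_cornerPath_of_isPathTo hγ.1
  refine (below_cornerPath_iff hkn hj).2 (Nat.le_findGreatest hj fun i hi => ?_)
  exact (hmax i hi).trans (hγ.2 _ (isPathTo_cornerPath hkn))

lemma isOptimal_lowOpt (ω : Site → ℝ) (n : ℕ) :
    IsOptimal ω ((n : ℤ), 1) (lowOpt ω ((n : ℤ), 1)) := by
  obtain ⟨k, hk, h⟩ := exists_isLowOptimal_cornerPath ω n
  exact lowOpt_eq_cornerPath hk h ▸ h.1

lemma lowOpt_eq_axisPath_iff (ω : Site → ℝ) (n : ℕ) :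
    lowOpt ω ((n : ℤ), 1) = axisPath n ↔
      ∀ k ≤ n, plen ω (cornerPath n k) ≤ plen ω (axisPath n) := by
  rw [← cornerPath_self, ← isOptimal_iff_forall_cornerPath (isPathTo_cornerPath le_rfl)]
  refine ⟨fun h => h ▸ isOptimal_lowOpt ω n, fun h => lowOpt_eq_cornerPath le_rfl ⟨h, ?_⟩⟩
  intro γ hγ
  obtain ⟨j, hj, rfl⟩ := exists_eq_cornerPath_of_isPathTo hγ.1
  exact (below_cornerPath_iff le_rfl hj).2 hj

lemma lowOpt_eq_axisPath_succ_iff (ω : Site → ℝ) (n : ℕ) :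
    lowOpt ω (((n + 1 : ℕ) : ℤ), 1) = axisPath (n + 1) ↔
      plen ω (lowOpt ω ((n : ℤ), 1)) - plen ω (lowOpt ω ((n : ℤ), 0)) ≤ ω ((n : ℤ) + 1, 0) := by
  obtain ⟨hγ, hopt⟩ := isOptimal_lowOpt ω n
  obtain ⟨k₀, hk₀, hγk₀⟩ := exists_eq_cornerPath_of_isPathTo hγ
  have hcorner : ∀ k ≤ n,
      plen ω (cornerPath (n + 1) k) = plen ω (cornerPath n k) + ω ((n : ℤ) + 1, 1) := by
    intro k hk
    rw [cornerPath_succ hk, plen_append_singleton]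
  have haxis : plen ω (axisPath (n + 1)) =
      plen ω (axisRow n) + ω ((n : ℤ) + 1, 0) + ω ((n : ℤ) + 1, 1) := by
    simp only [axisPath_eq_axisRow_append, axisRow_succ, plen_append_singleton]
    push_cast
    ring
  rw [lowOpt_eq_axisPath_iff, lowOpt_axisRow, sub_le_iff_le_add']
  constructor
  · intro h
    have := h k₀ (by omega)
    rw [hcorner k₀ hk₀, haxis, ← hγk₀] at this
    linarith
  · intro h k hk
    rcases Nat.le_succ_iff.1 hk with hk | rfl
    · have := hopt _ (isPathTo_cornerPath hk)
      rw [hcorner k hk, haxis]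
      linarith
    · rw [cornerPath_self]

lemma lowOpt_one_one_eq_axisPath_iff (ω : Site → ℝ) :
    lowOpt ω (1, 1) = axisPath 1 ↔ ω (0, 1) ≤ ω (1, 0) := by
  have h := lowOpt_eq_axisPath_iff ω 1
  have hcorner : cornerPath 1 0 = [(0, 0), (0, 1), (1, 1)] := by
    simp [cornerPath, axisPath_eq_axisRow_append, axisRow]
  have haxis : axisPath 1 = [(0, 0), (1, 0), (1, 1)] := by
    simp [axisPath_eq_axisRow_append, axisRow, List.range_succ]
  rw [Nat.cast_one] at h
  rw [h]
  refine ⟨fun h => by simpa [hcorner, haxis, plen] using h 0 zero_le_one, fun h k hk => ?_⟩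
  interval_cases k
  · simpa [hcorner, haxis, plen] using h
  · rw [cornerPath_self]

theorem omegaM_iff_omega1_general (ω : Site → ℝ)
    (m : ℕ) (hm : 1 ≤ m) (ωb : Site → ℝ)
    (hy : ∀ y : ℤ, 1 ≤ y →
      ωb (0, y) = plen ω (lowOpt ω (((m : ℤ) - 1, 0) + (0, y)))
        - plen ω (lowOpt ω (((m : ℤ) - 1, 0) + (0, y - 1))))
    (hoth : ∀ z : Site, z ≠ (0, 0) → ¬(z.1 = 0 ∧ 1 ≤ z.2) →
      ωb z = ω (((m : ℤ) - 1, 0) + z)) :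
    lowOpt ω ((m : ℤ), 1) = axisPath m ↔ lowOpt ωb (1, 1) = axisPath 1 := by
  obtain ⟨n, rfl⟩ := Nat.exists_eq_add_of_le' hm
  have hb : ((n + 1 : ℕ) : ℤ) - 1 = n := by push_cast; ring
  have hωb01 : ωb (0, 1) = plen ω (lowOpt ω ((n : ℤ), 1)) - plen ω (lowOpt ω ((n : ℤ), 0)) := by
    simpa [hb] using hy 1 le_rfl
  have hωb10 : ωb (1, 0) = ω ((n : ℤ) + 1, 0) := by
    simpa [hb] using hoth (1, 0) (by simp) (by simp)
  rw [lowOpt_eq_axisPath_succ_iff, lowOpt_one_one_eq_axisPath_iff, hωb01, hωb10]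

/-- Step II of the proof of Theorem 3, equivalence (9): `ω ∈ Ω_m ↔ ω^b ∈ Ω_1`. -/
theorem omegaM_iff_omega1 (ω : Site → ℝ) (hω : ∀ z : Site, 0 ≤ ω z)
    (m : ℕ) (hm : 1 ≤ m) (ωb : Site → ℝ)
    (h0 : ωb (0, 0) = plen ω (lowOpt ω ((m : ℤ) - 1, 0)))
    (hy : ∀ y : ℤ, 1 ≤ y →
      ωb (0, y) = plen ω (lowOpt ω (((m : ℤ) - 1, 0) + (0, y)))
        - plen ω (lowOpt ω (((m : ℤ) - 1, 0) + (0, y - 1))))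
    (hoth : ∀ z : Site, z ≠ (0, 0) → ¬(z.1 = 0 ∧ 1 ≤ z.2) →
      ωb z = ω (((m : ℤ) - 1, 0) + z)) :
    lowOpt ω ((m : ℤ), 1) = axisPath m ↔ lowOpt ωb (1, 1) = axisPath 1 :=
  omegaM_iff_omega1_general ω m hm ωb hy hoth
end
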